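/- For a ≥ 2, the maximum, over x ∈ ℕ such that the set Λ^x \ ⋃_{x'≠x} Λ^{x'} is nonempty, of the minimum ν-value on that set, ranges exactly over the set {z : 1 ≤ z ≤ a} ∪ {z(a+1) : 1 ≤ z ≤ a}; i.e., the set of minimal ν-values of nonempty 'parabolas' equals {1, 2, ..., a} ∪ {a+1, 2(a+1), ..., a(a+1)}. -/

import Mathlib

def Lam (a : ℕ) : Set ℕ := {n | ∃ i j : ℕ, n = i * a + j * (a + 1)}

noncomputable def nu (a l : ℕ) : ℕ := {m | m ∈ Lam a ∧ ∃ k ∈ Lam a, m + k = l}.ncard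

def LamX (a x : ℕ) : Set ℕ := {n | ∃ y ≤ x, n = a * x + y}

/-- `Λ^x \ ⋃_{x' ≠ x} Λ^{x'}`. -/
def UX (a x : ℕ) : Set ℕ := LamX a x \ {n | ∃ x', x' ≠ x ∧ n ∈ LamX a x'}

/-!
Every element of `Λ` is `q * a + r` with `r ≤ q` and `r < a`. A point `a * x + y` of
`Λ^x \ ⋃_{x' ≠ x} Λ^{x'}` has `y ≤ x`, `y < a` and `x ≤ y + a`, and the last condition forbids a
carry when it is written as a sum of two such elements, so `ν (a * x + y) = (y + 1) * (x - y + 1)`.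
This is concave in `y`, so its minimum over the admissible `y` sits at `y = x - a` (truncated),
giving `x + 1` for `x < a` and `(x - a + 1) * (a + 1)` for `a ≤ x < 2 * a`.
-/

lemma mul_add_mem_Lam {a q r : ℕ} (h : r ≤ q) : q * a + r ∈ Lam a := by
  obtain ⟨d, rfl⟩ := Nat.exists_eq_add_of_le h
  exact ⟨d, r, by ring⟩

lemma mem_Lam_iff {a n : ℕ} (ha : 0 < a) :
    n ∈ Lam a ↔ ∃ q r, r ≤ q ∧ r < a ∧ n = q * a + r := by
  refine ⟨?_, fun ⟨q, r, hrq, _, hn⟩ => hn ▸ mul_add_mem_Lam hrq⟩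
  rintro ⟨i, j, rfl⟩
  refine ⟨i + j + j / a, j % a,
    Nat.le_add_right_of_le ((Nat.mod_le j a).trans (Nat.le_add_left j i)), Nat.mod_lt _ ha, ?_⟩
  have := Nat.div_add_mod j a
  ring_nf at this ⊢
  omega

lemma eq_of_mul_add_eq_mul_add {a s t x y : ℕ} (h : s * a + t = x * a + y) (hts : t ≤ s)
    (hya : y < a) (hxy : x ≤ y + a) : s = x ∧ t = y := by
  have hsx : s = x := by
    rcases lt_trichotomy s x with hlt | heq | hgt
    · have : s * a + a ≤ x * a := by nlinarith
      omega
    · exact heq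
    · have : x * a + a ≤ s * a := by nlinarith
      omega
  subst hsx
  exact ⟨rfl, by omega⟩

lemma nu_summands_eq_image {a x y : ℕ} (hyx : y ≤ x) (hya : y < a) (hxy : x ≤ y + a) :
    {m | m ∈ Lam a ∧ ∃ k ∈ Lam a, m + k = a * x + y} =
      ((Finset.range (y + 1) ×ˢ Finset.range (x - y + 1)).image
        fun p => (p.1 + p.2) * a + p.1 : Set ℕ) := by
  have ha : 0 < a := by omega
  ext m
  simp only [Set.mem_ofPred_eq, Finset.coe_image, Set.mem_image, Finset.mem_coe,
    Finset.mem_product, Finset.mem_range, Prod.exists]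
  constructor
  · rintro ⟨hm, k, hk, hmk⟩
    obtain ⟨α, β, hβα, hβa, rfl⟩ := (mem_Lam_iff ha).1 hm
    obtain ⟨γ, δ, hδγ, hδa, rfl⟩ := (mem_Lam_iff ha).1 hk
    obtain ⟨hx, hy⟩ : α + γ = x ∧ β + δ = y :=
      eq_of_mul_add_eq_mul_add (by linarith) (by omega) hya hxy
    exact ⟨β, α - β, ⟨by omega, by omega⟩, by rw [Nat.add_sub_cancel' hβα]⟩
  · rintro ⟨β, t, ⟨hβ, ht⟩, rfl⟩
    refine ⟨mul_add_mem_Lam (by omega), (x - (β + t)) * a + (y - β),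
      mul_add_mem_Lam (by omega), ?_⟩
    calc (β + t) * a + β + ((x - (β + t)) * a + (y - β))
        = (β + t + (x - (β + t))) * a + (β + (y - β)) := by ring
      _ = a * x + y := by rw [Nat.add_sub_cancel' (by omega), Nat.add_sub_cancel' (by omega),
            mul_comm]

lemma nu_mul_add {a x y : ℕ} (hyx : y ≤ x) (hya : y < a) (hxy : x ≤ y + a) :
    nu a (a * x + y) = (y + 1) * (x - y + 1) := by
  rw [nu, nu_summands_eq_image hyx hya hxy, Set.ncard_coe_finset, Finset.card_image_of_injOn,
    Finset.card_product, Finset.card_range, Finset.card_range]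
  rintro ⟨β, t⟩ hp ⟨β', t'⟩ hq h
  simp only [Finset.coe_product, Set.mem_prod, Finset.coe_range, Set.mem_Iio] at hp hq
  obtain ⟨hs, hβ⟩ := eq_of_mul_add_eq_mul_add h (by omega) (by omega) (by omega)
  simp only [Prod.mk.injEq]
  omega

lemma mem_LamX_iff {a x n : ℕ} : n ∈ LamX a x ↔ a * x ≤ n ∧ n ≤ a * x + x := by
  constructor
  · rintro ⟨y, hy, rfl⟩
    omega
  · rintro ⟨h₁, h₂⟩
    exact ⟨n - a * x, by omega, by omega⟩

lemma mem_UX_iff {a x n : ℕ} :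
    n ∈ UX a x ↔ ∃ y ≤ x, y < a ∧ x ≤ y + a ∧ n = a * x + y := by
  simp only [UX, Set.mem_sdiff, Set.mem_ofPred_eq, not_exists, not_and, mem_LamX_iff]
  constructor
  · rintro ⟨⟨h₁, h₂⟩, hnot⟩
    obtain ⟨y, rfl⟩ := Nat.exists_eq_add_of_le h₁
    refine ⟨y, by omega, ?_, ?_, rfl⟩
    · by_contra! hay
      exact hnot (x + 1) (by omega) (by rw [mul_add_one]; omega) (by rw [mul_add_one]; omega)
    · by_contra! hxa
      obtain ⟨x', rfl⟩ : ∃ x', x = x' + 1 := ⟨x - 1, by omega⟩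
      rw [mul_add_one] at hnot
      exact hnot x' (by omega) (by omega) (by omega)
  · rintro ⟨y, hyx, hya, hxy, rfl⟩
    refine ⟨⟨by omega, by omega⟩, fun x' hx' hn => ?_⟩
    rcases Nat.lt_or_gt_of_ne hx' with hlt | hgt
    · have : a * (x' + 1) ≤ a * x := Nat.mul_le_mul_left a hlt
      rw [mul_add_one] at this
      omega
    · have : a * (x + 1) ≤ a * x' := Nat.mul_le_mul_left a hgt
      rw [mul_add_one] at this
      omega

lemma UX_nonempty_iff {a x : ℕ} : (UX a x).Nonempty ↔ x < 2 * a := by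
  constructor
  · rintro ⟨n, hn⟩
    obtain ⟨y, -, hya, hxy, -⟩ := mem_UX_iff.1 hn
    omega
  · intro hx
    exact ⟨_, mem_UX_iff.2 ⟨x - a, by omega, by omega, by omega, rfl⟩⟩

lemma isLeast_nu_image_UX {a x : ℕ} (hx : x < 2 * a) :
    IsLeast (nu a '' UX a x) ((x - a + 1) * (min x a + 1)) := by
  refine ⟨⟨_, mem_UX_iff.2 ⟨x - a, by omega, by omega, by omega, rfl⟩, ?_⟩, ?_⟩
  · rw [nu_mul_add (by omega) (by omega) (by omega)]
    congr 2
    omega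
  · rintro _ ⟨_, hn, rfl⟩
    obtain ⟨y, hyx, hya, hxy, rfl⟩ := mem_UX_iff.1 hn
    rw [nu_mul_add hyx hya hxy]
    -- with `y = (x - a) + u`, the difference of the two products is `u * (min x a - y)`
    obtain ⟨u, rfl⟩ : ∃ u, y = x - a + u := ⟨y - (x - a), by omega⟩
    have hx' : x - (x - a + u) + 1 = min x a + 1 - u := by omega
    have hy' : x - a + u ≤ min x a := by omega
    rw [hx']
    nlinarith [Nat.sub_add_cancel (show u ≤ min x a + 1 by omega)]

theorem stmt17_general (a : ℕ) :
    {v : ℕ | ∃ x : ℕ, (UX a x).Nonempty ∧ v = sInf (nu a '' UX a x)} =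
      {v : ℕ | 1 ≤ v ∧ v ≤ a} ∪ {v : ℕ | ∃ z, 1 ≤ z ∧ z ≤ a ∧ v = z * (a + 1)} := by
  ext v
  simp only [Set.mem_ofPred_eq, Set.mem_union, UX_nonempty_iff]
  constructor
  · rintro ⟨x, hx, rfl⟩
    rw [(isLeast_nu_image_UX hx).csInf_eq]
    rcases lt_or_ge x a with h | h
    · left
      rw [min_eq_left h.le, Nat.sub_eq_zero_of_le h.le, zero_add, one_mul]
      omega
    · exact Or.inr ⟨x - a + 1, by omega, by omega, by rw [min_eq_right h]⟩
  · rintro (⟨h₁, h₂⟩ | ⟨z, h₁, h₂, rfl⟩)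
    · refine ⟨v - 1, by omega, ?_⟩
      rw [(isLeast_nu_image_UX (by omega)).csInf_eq, min_eq_left (by omega),
        Nat.sub_eq_zero_of_le (by omega), zero_add, one_mul]
      omega
    · refine ⟨a + z - 1, by omega, ?_⟩
      rw [(isLeast_nu_image_UX (by omega)).csInf_eq, min_eq_right (by omega)]
      congr 1
      omega

theorem stmt17 (a : ℕ) (ha : 2 ≤ a) :
    {v : ℕ | ∃ x : ℕ, (UX a x).Nonempty ∧ v = sInf (nu a '' UX a x)} =
      {v : ℕ | 1 ≤ v ∧ v ≤ a} ∪ {v : ℕ | ∃ z, 1 ≤ z ∧ z ≤ a ∧ v = z * (a + 1)} :=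
  stmt17_general a
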